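/- arXiv:1704.04295 — 2 statements merged into one kernel-verified Lean document; each statement's English description precedes it below -/
import Mathlib

section
/- In diffusion on a graph, suppose T is a time such that P(t) is constant for all t ≥ T (so no edge ever has label (1,1), (-1,-1), (0,1) or (0,-1) at any time t ≥ T). Then: (1) if an edge has label (1,0), (-1,0) or (0,0) at some time t ≥ T, it has label (0,0) at all times t' ≥ t+1; (2) if an edge has label (-1,1) at time t ≥ T, then at time t+1 it has label (1,-1) or (1,0); (3) if an edge has label (1,-1) at time t ≥ T, then at time t+1 it has label (-1,1) or (-1,0). -/
open Finset Classical

/-- One step of the diffusion process: each vertex gains one chip from each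
neighbour with a strictly larger label and loses one chip to each neighbour
with a strictly smaller label. -/
noncomputable def diffStep {n : ℕ} (G : SimpleGraph (Fin n)) (w : Fin n → ℤ) : Fin n → ℤ :=
  fun v => w v + ((Finset.univ.filter fun u => G.Adj v u ∧ w v < w u).card : ℤ)
             - ((Finset.univ.filter fun u => G.Adj v u ∧ w u < w v).card : ℤ)

/-- The labelling at time `t` of the diffusion process started from `w0`. -/
noncomputable def diff {n : ℕ} (G : SimpleGraph (Fin n)) (w0 : Fin n → ℤ) (t : ℕ) : Fin n → ℤ :=
  (diffStep G)^[t] w0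

/-- The potential `P(t) = ∑_v w_v(t) · w_v(t+1)`. -/
noncomputable def pot {n : ℕ} (G : SimpleGraph (Fin n)) (w0 : Fin n → ℤ) (t : ℕ) : ℤ :=
  ∑ v, diff G w0 t v * diff G w0 (t + 1) v

/-- `x_{uv}(t) = sgn(w_u(t) - w_v(t))` for edges, `0` for non-edges. -/
noncomputable def xlab {n : ℕ} (G : SimpleGraph (Fin n)) (w0 : Fin n → ℤ)
    (u v : Fin n) (t : ℕ) : ℤ :=
  if G.Adj u v then Int.sign (diff G w0 t u - diff G w0 t v) else 0

/-- `y_{uv}(t) = sgn(w_u(t+1) - w_v(t+1))` for edges, `0` for non-edges. -/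
noncomputable def ylab {n : ℕ} (G : SimpleGraph (Fin n)) (w0 : Fin n → ℤ)
    (u v : Fin n) (t : ℕ) : ℤ :=
  if G.Adj u v then Int.sign (diff G w0 (t + 1) u - diff G w0 (t + 1) v) else 0

/-- The label `(x_{uv}(t), y_{uv}(t))` of the edge `uv` at time `t`. -/
noncomputable def elabel {n : ℕ} (G : SimpleGraph (Fin n)) (w0 : Fin n → ℤ)
    (u v : Fin n) (t : ℕ) : ℤ × ℤ :=
  (xlab G w0 u v t, ylab G w0 u v t)

/-!
Both `w(t+2) - w(t+1)` and `w(t+1) - w(t)` are sums of signs along edges, so pairing the two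
orientations of each edge gives `2 (P(t+1) - P(t)) = -∑ z (sgn z + sgn x)` over ordered adjacent
pairs `(u, v)`, with `z = w_u(t+1) - w_v(t+1)` and `x = w_u(t) - w_v(t)`. Every summand is
nonnegative, so a constant potential forces each edge to have `y = 0` or `y = -x`. As the second
coordinate of a label at time `t` is its first coordinate at time `t+1`, a vanishing `y` stays
zero forever, and `y = ±1` forces the next label to be `(±1, ∓1)` or `(±1, 0)`.
-/

theorem two_mul_sum_sum_mul_of_antisymm {α R : Type*} [Fintype α] [CommRing R]
    (a : α → R) (g : α → α → R) (hg : ∀ u v, g u v = -g v u) :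
    2 * ∑ v, ∑ u, a v * g v u = ∑ v, ∑ u, (a v - a u) * g v u := by
  have hswap : ∑ v, ∑ u, a u * g v u = -∑ v, ∑ u, a v * g v u := by
    rw [Finset.sum_comm, ← Finset.sum_neg_distrib]
    refine Finset.sum_congr rfl fun v _ => ?_
    rw [← Finset.sum_neg_distrib]
    refine Finset.sum_congr rfl fun u _ => ?_
    rw [hg]; ring
  simp only [sub_mul, Finset.sum_sub_distrib]
  rw [hswap]; ring

theorem Int.mul_sign_add_sign_nonneg (z x : ℤ) : 0 ≤ z * (z.sign + x.sign) := by
  rcases lt_trichotomy z 0 with hz | rfl | hz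
  · rw [Int.sign_eq_neg_one_of_neg hz]
    rcases x.sign_trichotomy with hx | hx | hx <;> rw [hx] <;> omega
  · simp
  · rw [Int.sign_eq_one_of_pos hz]
    rcases x.sign_trichotomy with hx | hx | hx <;> rw [hx] <;> omega

theorem Int.sign_eq_zero_or_neg_of_mul_sign_add_sign_eq_zero {z x : ℤ}
    (h : z * (z.sign + x.sign) = 0) : z.sign = 0 ∨ z.sign = -x.sign := by
  rcases mul_eq_zero.1 h with hz | hs
  · simp [hz]
  · omega

section Diffusion

variable {n : ℕ} (G : SimpleGraph (Fin n))

theorem diffStep_sub_self (w : Fin n → ℤ) (v : Fin n) :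
    diffStep G w v - w v = ∑ u, if G.Adj v u then (w u - w v).sign else 0 := by
  have hsign : ∀ u, (if G.Adj v u then (w u - w v).sign else 0)
      = (if G.Adj v u ∧ w v < w u then 1 else 0) - (if G.Adj v u ∧ w u < w v then 1 else 0) := by
    intro u
    by_cases ha : G.Adj v u
    · rcases lt_trichotomy (w u) (w v) with h | h | h
      · simp [ha, h, h.not_gt, Int.sign_eq_neg_one_of_neg (sub_neg.2 h)]
      · simp [ha, h]
      · simp [ha, h, h.not_gt, Int.sign_eq_one_of_pos (sub_pos.2 h)]
    · simp [ha]
  simp only [diffStep, hsign, Finset.sum_sub_distrib, Finset.sum_boole]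
  ring

theorem two_mul_sum_mul_diffStep_sub (w : Fin n → ℤ) :
    2 * (∑ v, diffStep G w v * diffStep G (diffStep G w) v - ∑ v, w v * diffStep G w v) =
      -∑ v, ∑ u, if G.Adj v u then
        (diffStep G w u - diffStep G w v) *
          ((diffStep G w u - diffStep G w v).sign + (w u - w v).sign) else 0 := by
  set a := diffStep G w
  set g : Fin n → Fin n → ℤ := fun v u =>
    if G.Adj v u then (a u - a v).sign + (w u - w v).sign else 0
  have hg : ∀ u v, g u v = -g v u := by
    intro u v
    by_cases ha : G.Adj u v
    · simp only [g, ha, ha.symm, if_true]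
      rw [← neg_sub (a u), ← neg_sub (w u), Int.sign_neg, Int.sign_neg]
      ring
    · have ha' : ¬G.Adj v u := fun h => ha h.symm
      simp [g, ha, ha']
  have hsum : ∑ v, a v * diffStep G a v - ∑ v, w v * a v = ∑ v, ∑ u, a v * g v u := by
    simp only [← Finset.sum_sub_distrib, ← Finset.mul_sum]
    refine Finset.sum_congr rfl fun v _ => ?_
    have hg_sum : ∑ u, g v u = (diffStep G a v - a v) + (a v - w v) := by
      rw [diffStep_sub_self G a, (diffStep_sub_self G w v : a v - w v = _),
        ← Finset.sum_add_distrib]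
      refine Finset.sum_congr rfl fun u _ => ?_
      simp only [g]
      split_ifs <;> ring
    rw [hg_sum]; ring
  rw [hsum, two_mul_sum_sum_mul_of_antisymm a g hg, ← Finset.sum_neg_distrib]
  refine Finset.sum_congr rfl fun v _ => ?_
  rw [← Finset.sum_neg_distrib]
  refine Finset.sum_congr rfl fun u _ => ?_
  simp only [g]
  split_ifs <;> ring

variable (w0 : Fin n → ℤ)

theorem diff_succ (t : ℕ) : diff G w0 (t + 1) = diffStep G (diff G w0 t) :=
  Function.iterate_succ_apply' _ _ _

theorem xlab_succ (u v : Fin n) (t : ℕ) : xlab G w0 u v (t + 1) = ylab G w0 u v t := rfl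

theorem two_mul_pot_succ_sub_pot (t : ℕ) :
    2 * (pot G w0 (t + 1) - pot G w0 t) = -∑ v, ∑ u,
      (diff G w0 (t + 1) u - diff G w0 (t + 1) v) * (ylab G w0 u v t + xlab G w0 u v t) := by
  have h := two_mul_sum_mul_diffStep_sub G (diff G w0 t)
  simp only [← diff_succ] at h
  rw [pot, pot, h]
  congr 1
  refine Finset.sum_congr rfl fun v _ => Finset.sum_congr rfl fun u _ => ?_
  by_cases ha : G.Adj u v
  · simp [xlab, ylab, ha, ha.symm]
  · have ha' : ¬G.Adj v u := fun h => ha h.symm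
    simp [xlab, ylab, ha, ha']

theorem mul_ylab_add_xlab_nonneg (t : ℕ) (u v : Fin n) :
    0 ≤ (diff G w0 (t + 1) u - diff G w0 (t + 1) v) * (ylab G w0 u v t + xlab G w0 u v t) := by
  unfold ylab xlab
  split_ifs
  exacts [Int.mul_sign_add_sign_nonneg _ _, by simp]

theorem mul_ylab_add_xlab_eq_zero {t : ℕ} (h : pot G w0 (t + 1) = pot G w0 t) (u v : Fin n) :
    (diff G w0 (t + 1) u - diff G w0 (t + 1) v) * (ylab G w0 u v t + xlab G w0 u v t) = 0 := by
  have hsum := two_mul_pot_succ_sub_pot G w0 t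
  rw [h, sub_self, mul_zero, zero_eq_neg] at hsum
  have hv := (Finset.sum_eq_zero_iff_of_nonneg fun v _ =>
    Finset.sum_nonneg fun u _ => mul_ylab_add_xlab_nonneg G w0 t u v).1 hsum v (Finset.mem_univ _)
  exact (Finset.sum_eq_zero_iff_of_nonneg fun u _ => mul_ylab_add_xlab_nonneg G w0 t u v).1 hv u
    (Finset.mem_univ _)

theorem ylab_eq_zero_or_neg_xlab {t : ℕ} (h : pot G w0 (t + 1) = pot G w0 t) (u v : Fin n) :
    ylab G w0 u v t = 0 ∨ ylab G w0 u v t = -xlab G w0 u v t := by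
  have h0 := mul_ylab_add_xlab_eq_zero G w0 h u v
  by_cases ha : G.Adj u v
  · simp only [ylab, xlab, if_pos ha] at h0 ⊢
    exact Int.sign_eq_zero_or_neg_of_mul_sign_add_sign_eq_zero h0
  · simp [ylab, ha]

section Stationary

variable {G w0} {T : ℕ} (hT : ∀ t : ℕ, T ≤ t → pot G w0 t = pot G w0 T)
include hT

theorem pot_succ_eq_of_le {t : ℕ} (ht : T ≤ t) : pot G w0 (t + 1) = pot G w0 t :=
  (hT (t + 1) (by omega)).trans (hT t ht).symm

theorem ylab_eq_zero_of_le {u v : Fin n} {t t' : ℕ} (ht : T ≤ t) (h0 : ylab G w0 u v t = 0)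
    (htt' : t ≤ t') : ylab G w0 u v t' = 0 := by
  induction t', htt' using Nat.le_induction with
  | base => exact h0
  | succ s hs ih =>
    rcases ylab_eq_zero_or_neg_xlab G w0 (pot_succ_eq_of_le hT (by omega : T ≤ s + 1)) u v
      with h | h
    · exact h
    · rw [h, xlab_succ, ih, neg_zero]

theorem elabel_eq_zero_of_ylab_eq_zero {u v : Fin n} {t t' : ℕ} (ht : T ≤ t)
    (h0 : ylab G w0 u v t = 0) (htt' : t + 1 ≤ t') : elabel G w0 u v t' = (0, 0) := by
  obtain ⟨s, rfl⟩ : ∃ s, t' = s + 1 := ⟨t' - 1, by omega⟩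
  refine Prod.ext ?_ (ylab_eq_zero_of_le hT ht h0 (by omega))
  exact (xlab_succ G w0 u v s).trans (ylab_eq_zero_of_le hT ht h0 (by omega))

theorem elabel_succ_of_ylab_eq {u v : Fin n} {t : ℕ} {s : ℤ} (ht : T ≤ t)
    (hy : ylab G w0 u v t = s) :
    elabel G w0 u v (t + 1) = (s, -s) ∨ elabel G w0 u v (t + 1) = (s, 0) := by
  have hx : xlab G w0 u v (t + 1) = s := (xlab_succ G w0 u v t).trans hy
  rcases ylab_eq_zero_or_neg_xlab G w0 (pot_succ_eq_of_le hT (ht.trans (Nat.le_succ t))) u v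
    with h | h
  · exact Or.inr (Prod.ext hx h)
  · exact Or.inl (Prod.ext hx (h.trans (congrArg Neg.neg hx)))

end Stationary

end Diffusion

theorem stmt11 {n : ℕ} (G : SimpleGraph (Fin n)) (w0 : Fin n → ℤ) (T : ℕ)
    (hT : ∀ t : ℕ, T ≤ t → pot G w0 t = pot G w0 T) :
    ∀ u v : Fin n, u < v → G.Adj u v → ∀ t : ℕ, T ≤ t →
      ((elabel G w0 u v t = ((1 : ℤ), (0 : ℤ)) ∨ elabel G w0 u v t = ((-1 : ℤ), (0 : ℤ)) ∨
          elabel G w0 u v t = ((0 : ℤ), (0 : ℤ))) →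
        ∀ t' : ℕ, t + 1 ≤ t' → elabel G w0 u v t' = ((0 : ℤ), (0 : ℤ))) ∧
      (elabel G w0 u v t = ((-1 : ℤ), (1 : ℤ)) →
        elabel G w0 u v (t + 1) = ((1 : ℤ), (-1 : ℤ)) ∨
          elabel G w0 u v (t + 1) = ((1 : ℤ), (0 : ℤ))) ∧
      (elabel G w0 u v t = ((1 : ℤ), (-1 : ℤ)) →
        elabel G w0 u v (t + 1) = ((-1 : ℤ), (1 : ℤ)) ∨
          elabel G w0 u v (t + 1) = ((-1 : ℤ), (0 : ℤ))) := by
  intro u v _ _ t ht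
  have hy : ∀ {p : ℤ × ℤ}, elabel G w0 u v t = p → ylab G w0 u v t = p.2 :=
    fun h => congrArg Prod.snd h
  refine ⟨fun h _ => elabel_eq_zero_of_ylab_eq_zero hT ht ?_, fun h =>
    elabel_succ_of_ylab_eq hT ht (hy h), fun h => ?_⟩
  · rcases h with h | h | h <;> exact hy h
  · simpa using elabel_succ_of_ylab_eq hT ht (hy h)
end

section
/- In diffusion on any finite graph from any integer initial configuration, the labels remain bounded: there exists M such that |w_v(t)| ≤ M for all vertices v and all times t. -/
open Finset Classical

/-!
The potential `P(t) = ∑_v w_v(t) w_v(t+1)` is non-increasing: `P(t+1) - P(t)` is a sum over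
ordered edges, and pairing the two orientations of an edge `uv` gives
`d · (x_{uv}(t) - sgn d)` with `d = w_v(t+1) - w_u(t+1)`, which is `≤ 0` because `|x_{uv}(t)| ≤ 1`.
On the other hand a label moves by at most `n` in one step, so `2 w_v(t) w_v(t+1) ≥ w_v(t)² - n²`
and `2 P(t)` bounds `∑_v w_v(t)² - n³`. Hence `∑_v w_v(t)² ≤ 2 P(0) + n³` for all `t`.
-/

lemma Int.abs_le_sq (a : ℤ) : |a| ≤ a ^ 2 :=
  (Int.abs_eq_natAbs a).trans_le (Int.natAbs_le_self_sq a)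

lemma Int.sign_sub_eq_ite (a b : ℤ) :
    Int.sign (a - b) = (if b < a then 1 else 0) - (if a < b then 1 else 0) := by
  rcases lt_trichotomy a b with h | rfl | h
  · simp [h, h.not_gt, Int.sign_eq_neg_one_iff_neg.2 (sub_neg.2 h)]
  · simp
  · simp [h, h.not_gt, Int.sign_eq_one_iff_pos.2 (sub_pos.2 h)]

lemma Int.mul_le_mul_sign_self (x s : ℤ) (hs : |s| ≤ 1) : x * s ≤ x * Int.sign x := by
  rw [mul_comm x x.sign, Int.sign_mul_self_eq_abs]
  calc x * s ≤ |x * s| := le_abs_self _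
    _ = |x| * |s| := abs_mul x s
    _ ≤ |x| := mul_le_of_le_one_right (abs_nonneg x) hs

lemma Int.abs_sign_le_one (a : ℤ) : |Int.sign a| ≤ 1 := by
  rcases Int.sign_trichotomy a with h | h | h <;> simp [h]

lemma sq_sub_sq_le_two_mul {R : Type*} [CommRing R] [LinearOrder R] [IsStrictOrderedRing R]
    {a b c : R} (h : |b - a| ≤ c) : a ^ 2 - c ^ 2 ≤ 2 * (a * b) := by
  have hsq : (b - a) ^ 2 ≤ c ^ 2 := sq_le_sq' (abs_le.1 h).1 (abs_le.1 h).2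
  nlinarith [sq_nonneg b]

lemma Finset.sum_sum_nonpos_of_add_swap_nonpos {ι M : Type*} [AddCommMonoid M] [LinearOrder M]
    [IsOrderedCancelAddMonoid M] {s : Finset ι} {g : ι → ι → M} (h : ∀ i j, g i j + g j i ≤ 0) :
    ∑ i ∈ s, ∑ j ∈ s, g i j ≤ 0 := by
  have h2 : ∑ i ∈ s, ∑ j ∈ s, g i j + ∑ i ∈ s, ∑ j ∈ s, g i j ≤ 0 := by
    nth_rw 2 [Finset.sum_comm]
    rw [← Finset.sum_add_distrib]
    exact Finset.sum_nonpos fun i _ => Finset.sum_add_distrib.symm.trans_le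
      (Finset.sum_nonpos fun j _ => h i j)
  exact add_self_nonpos_iff.1 h2

section Diffusion

variable {n : ℕ} (G : SimpleGraph (Fin n))

lemma diffStep_apply (w : Fin n → ℤ) (v : Fin n) :
    diffStep G w v = w v + ∑ u, if G.Adj u v then Int.sign (w u - w v) else 0 := by
  simp only [diffStep, Finset.card_filter]
  push_cast
  rw [add_sub_assoc, ← Finset.sum_sub_distrib]
  congr 1
  refine Finset.sum_congr rfl fun u _ => ?_
  by_cases huv : G.Adj u v <;> simp [huv, G.adj_comm v u, Int.sign_sub_eq_ite]

lemma abs_diffStep_sub_le (w : Fin n → ℤ) (v : Fin n) : |diffStep G w v - w v| ≤ n := by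
  have card_le (s : Finset (Fin n)) : (#s : ℤ) ≤ n := by
    exact_mod_cast (card_le_univ _).trans_eq (Fintype.card_fin n)
  rw [diffStep, add_sub_assoc, add_sub_cancel_left]
  exact abs_sub_le_of_nonneg_of_le (by positivity) (card_le _) (by positivity) (card_le _)

variable (w0 : Fin n → ℤ)

lemma diff_succ_apply (t : ℕ) (v : Fin n) :
    diff G w0 (t + 1) v = diff G w0 t v + ∑ u, xlab G w0 u v t := by
  rw [diff, Function.iterate_succ_apply', diffStep_apply]
  rfl

lemma abs_diff_succ_sub_le (t : ℕ) (v : Fin n) : |diff G w0 (t + 1) v - diff G w0 t v| ≤ n := by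
  rw [diff, Function.iterate_succ_apply']
  exact abs_diffStep_sub_le G _ v

lemma pot_succ_sub_pot (t : ℕ) :
    pot G w0 (t + 1) - pot G w0 t =
      ∑ v, ∑ u, diff G w0 (t + 1) v * (xlab G w0 u v t + ylab G w0 u v t) := by
  have hstep (v : Fin n) : diff G w0 (t + 2) v - diff G w0 t v =
      ∑ u, (xlab G w0 u v t + ylab G w0 u v t) := by
    rw [diff_succ_apply G w0 (t + 1), diff_succ_apply G w0 t, Finset.sum_add_distrib]
    simp only [xlab, ylab]
    ring
  simp only [pot, ← Finset.sum_sub_distrib, ← Finset.mul_sum, ← hstep]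
  exact Finset.sum_congr rfl fun v _ => by ring

lemma pot_edge_pair_nonpos (u v : Fin n) (t : ℕ) :
    diff G w0 (t + 1) v * (xlab G w0 u v t + ylab G w0 u v t)
      + diff G w0 (t + 1) u * (xlab G w0 v u t + ylab G w0 v u t) ≤ 0 := by
  by_cases huv : G.Adj u v
  · simp only [xlab, ylab, if_pos huv, if_pos huv.symm]
    have sign_swap (a b : ℤ) : Int.sign (a - b) = -Int.sign (b - a) := by
      rw [← Int.sign_neg, neg_sub]
    set a := diff G w0 (t + 1) v
    set b := diff G w0 (t + 1) u
    have key := Int.mul_le_mul_sign_self (a - b) (Int.sign (diff G w0 t u - diff G w0 t v))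
      (Int.abs_sign_le_one _)
    rw [sign_swap b a, sign_swap (diff G w0 t v)]
    linarith
  · simp [xlab, ylab, huv, G.adj_comm v u]

lemma antitone_pot : Antitone (pot G w0) := by
  refine antitone_nat_of_succ_le fun t => sub_nonpos.1 ?_
  rw [pot_succ_sub_pot]
  exact Finset.sum_sum_nonpos_of_add_swap_nonpos fun v u => pot_edge_pair_nonpos G w0 u v t

lemma sum_sq_sub_le_two_mul_pot (t : ℕ) : ∑ v, diff G w0 t v ^ 2 - (n : ℤ) ^ 3 ≤ 2 * pot G w0 t :=
  calc ∑ v, diff G w0 t v ^ 2 - (n : ℤ) ^ 3 = ∑ v, (diff G w0 t v ^ 2 - (n : ℤ) ^ 2) := by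
        simp only [Finset.sum_sub_distrib, Finset.sum_const, card_univ, Fintype.card_fin,
          nsmul_eq_mul]
        ring
    _ ≤ ∑ v, 2 * (diff G w0 t v * diff G w0 (t + 1) v) :=
        Finset.sum_le_sum fun v _ => sq_sub_sq_le_two_mul (abs_diff_succ_sub_le G w0 t v)
    _ = 2 * pot G w0 t := by rw [pot, Finset.mul_sum]

end Diffusion

theorem stmt19 {n : ℕ} (G : SimpleGraph (Fin n)) (w0 : Fin n → ℤ) :
    ∃ M : ℤ, ∀ t : ℕ, ∀ v : Fin n, |diff G w0 t v| ≤ M := by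
  refine ⟨2 * pot G w0 0 + (n : ℤ) ^ 3, fun t v => ?_⟩
  calc |diff G w0 t v| ≤ diff G w0 t v ^ 2 := Int.abs_le_sq _
    _ ≤ ∑ u, diff G w0 t u ^ 2 :=
        Finset.single_le_sum (f := fun u => diff G w0 t u ^ 2) (fun u _ => sq_nonneg _)
          (Finset.mem_univ v)
    _ ≤ 2 * pot G w0 t + (n : ℤ) ^ 3 := by linarith [sum_sq_sub_le_two_mul_pot G w0 t]
    _ ≤ 2 * pot G w0 0 + (n : ℤ) ^ 3 := by linarith [antitone_pot G w0 (Nat.zero_le t)]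
end
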